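/- Let q ∈ ℂ* not a root of unity and W = ⟨e, f | ef = qfe + 1⟩. The module H = ℂ[f] (with f acting by multiplication and e acting as the q-derivative determined by e·1 = 0 and the relation) is a simple W-module, and every W-module M with e acting locally nilpotently is isomorphic to a direct sum of copies of H. In particular, the category of such locally-nilpotent W-modules is semisimple. -/

import Mathlib

open Finset Polynomial

noncomputable section

/-- The `q`-integer `(n)_q = 1 + q + ⋯ + q^(n-1)`. -/
def qInt (q : ℂ) (n : ℕ) : ℂ := ∑ i ∈ Finset.range n, q ^ i

/-- The defining relation of the quantized Weyl algebra: `e f = q f e + 1`, where the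
generator `e` is `FreeAlgebra.ι ℂ true` and `f` is `FreeAlgebra.ι ℂ false`. -/
inductive WeylRel (q : ℂ) : FreeAlgebra ℂ Bool → FreeAlgebra ℂ Bool → Prop
  | rel : WeylRel q (FreeAlgebra.ι ℂ true * FreeAlgebra.ι ℂ false)
      (q • (FreeAlgebra.ι ℂ false * FreeAlgebra.ι ℂ true) + 1)

/-- The quantized Weyl algebra `W = ⟨e, f | ef = qfe + 1⟩`. -/
abbrev WeylAlg (q : ℂ) := RingQuot (WeylRel q)

/-- The generator `e` of `W`. -/
def eW (q : ℂ) : WeylAlg q := RingQuot.mkAlgHom ℂ (WeylRel q) (FreeAlgebra.ι ℂ true)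

/-- The generator `f` of `W`. -/
def fW (q : ℂ) : WeylAlg q := RingQuot.mkAlgHom ℂ (WeylRel q) (FreeAlgebra.ι ℂ false)

/-- The `q`-derivative operator on `ℂ[f]`: `fⁿ ↦ (n)_q f^(n-1)`. -/
def Eop (q : ℂ) : Module.End ℂ (Polynomial ℂ) :=
  Polynomial.lsum fun n => qInt q n • (Polynomial.monomial (n - 1) : ℂ →ₗ[ℂ] Polynomial ℂ)

/-- Multiplication by `f` on `ℂ[f]`: `fⁿ ↦ f^(n+1)`. -/
def Fop : Module.End ℂ (Polynomial ℂ) := LinearMap.mulLeft ℂ (Polynomial.X : Polynomial ℂ)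

/-- The relation `e f = q f e + 1` holds for the operators `Eop q` and `Fop`. -/
theorem EopFop_rel (q : ℂ) : Eop q * Fop = q • (Fop * Eop q) + 1 := by
  have hE : ∀ (m : ℕ) (a : ℂ), Eop q (monomial m a) = qInt q m • monomial (m - 1) a := by
    intro m a
    simp [Eop, Polynomial.sum_monomial_index]
  have hF : ∀ (m : ℕ) (a : ℂ), Fop (monomial m a) = monomial (m + 1) a := by
    intro m a
    simp [Fop, X_mul_monomial]
  apply Polynomial.lhom_ext'
  intro n
  apply LinearMap.ext_ring
  show (Eop q * Fop) (monomial n 1) = (q • (Fop * Eop q) + 1) (monomial n 1)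
  rw [Module.End.mul_apply, hF, hE]
  rw [LinearMap.add_apply, LinearMap.smul_apply, Module.End.mul_apply, hE, Module.End.one_apply]
  cases n with
  | zero => simp [qInt]
  | succ m =>
      rw [map_smul, hF]
      simp only [Nat.add_sub_cancel]
      rw [smul_smul]
      have h1 : qInt q (m + 1 + 1) = q * qInt q (m + 1) + 1 := by
        rw [qInt, qInt, Finset.sum_range_succ', Finset.mul_sum]
        simp [pow_succ, mul_comm, add_comm]
      rw [h1, add_smul, one_smul]

/-- The representation of `W` on `ℂ[f]` with `f` acting by multiplication and `e` by the
`q`-derivative. -/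
def weylRep (q : ℂ) : WeylAlg q →ₐ[ℂ] Module.End ℂ (Polynomial ℂ) :=
  RingQuot.liftAlgHom ℂ
    ⟨FreeAlgebra.lift ℂ (fun b => if b then Eop q else Fop), by
      rintro a b ⟨⟩
      simp only [map_add, map_mul, map_smul, map_one, FreeAlgebra.lift_ι_apply, if_pos, if_neg]
      exact EopFop_rel q⟩

/-- The module structure on `H = ℂ[f]` over `W`, with `f·fⁿ = f^(n+1)` and
`e·fⁿ = (n)_q f^(n-1)`. -/
instance weylModule (q : ℂ) : Module (WeylAlg q) (Polynomial ℂ) :=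
  Module.compHom _ (weylRep q).toRingHom

/-!
Every polynomial is killed by a power of the `q`-derivative `e`, and only the constants are
killed by `e` itself (as `(n)_q ≠ 0`); so a suitable element of `W` brings any nonzero polynomial
to `1`, which generates `ℂ[f]`.

For a locally nilpotent `M`, choose a `ℂ`-basis `(vᵢ)` of `ker e`. Since `e p(f) v = (D_q p)(f) v`
whenever `e v = 0` (induction on `p` using `ef = qfe + 1`), each `p ↦ p(f) vᵢ` is `W`-linear, and
together they give `Ψ : ⊕ᵢ ℂ[f] → M`. The kernel of `Ψ` is locally nilpotent, so if nonzero it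
meets `ker e = ⊕ᵢ ℂ`, where `Ψ` is injective by linear independence. The image of `Ψ` contains
`ker e` and `e` maps it onto itself (the `q`-derivative is onto), so `e m ∈ im Ψ` forces
`m ∈ im Ψ`; induction on the nilpotency order of `m` gives surjectivity.
-/

section KilledByPow

variable {A M : Type*} [Monoid A] [AddMonoid M] [DistribMulAction A M]

def killedByPow (a : A) : AddSubmonoid M where
  carrier := {x | ∃ l : ℕ, a ^ l • x = 0}
  add_mem' := by
    rintro x y ⟨k, hx⟩ ⟨l, hy⟩
    refine ⟨k + l, ?_⟩
    rw [smul_add, pow_add, mul_smul, mul_smul, hy, smul_zero, add_zero, smul_smul, ← pow_add,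
      add_comm, pow_add, mul_smul, hx, smul_zero]
  zero_mem' := ⟨0, smul_zero _⟩

theorem exists_pow_smul_ne_zero_and_smul_eq_zero {a : A} {x : M} (hx : x ∈ killedByPow a)
    (hx0 : x ≠ 0) : ∃ k : ℕ, a ^ k • x ≠ 0 ∧ a • a ^ k • x = 0 := by
  classical
  have hl : a ^ Nat.find hx • x = 0 := Nat.find_spec hx
  obtain ⟨k, hk⟩ : ∃ k, Nat.find hx = k + 1 := by
    refine Nat.exists_eq_succ_of_ne_zero fun h0 => hx0 ?_
    rwa [h0, pow_zero, one_smul] at hl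
  refine ⟨k, Nat.find_min hx (by omega), ?_⟩
  rwa [smul_smul, ← pow_succ', ← hk]

theorem Finsupp.mem_killedByPow {ι : Type*} {a : A} (h : ∀ y : M, y ∈ killedByPow a)
    (x : ι →₀ M) : x ∈ killedByPow a := by
  induction x using Finsupp.induction_linear with
  | zero => exact zero_mem _
  | add x y hx hy => exact add_mem hx hy
  | single i y =>
    obtain ⟨l, hl⟩ := h y
    exact ⟨l, by rw [Finsupp.smul_single, hl, Finsupp.single_zero]⟩

theorem Finsupp.exists_smul_eq {ι : Type*} {a : A} (h : ∀ y : M, ∃ z, a • z = y)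
    (x : ι →₀ M) : ∃ z, a • z = x := by
  induction x using Finsupp.induction_linear with
  | zero => exact ⟨0, smul_zero a⟩
  | add x y hx hy =>
    obtain ⟨z, rfl⟩ := hx
    obtain ⟨z', rfl⟩ := hy
    exact ⟨z + z', smul_add a z z'⟩
  | single i y =>
    obtain ⟨z, rfl⟩ := h y
    exact ⟨Finsupp.single i z, Finsupp.smul_single a i z⟩

end KilledByPow

theorem mem_of_mem_killedByPow {A M : Type*} [Ring A] [AddCommGroup M] [Module A M] {a : A}
    (N : Submodule A M) (hker : ∀ x : M, a • x = 0 → x ∈ N)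
    (hsurj : ∀ y ∈ N, ∃ z ∈ N, a • z = y) {m : M} (hm : m ∈ killedByPow a) : m ∈ N := by
  obtain ⟨l, hl⟩ := hm
  induction l generalizing m with
  | zero =>
    rw [pow_zero, one_smul] at hl
    exact hl ▸ N.zero_mem
  | succ l ih =>
    rw [pow_succ, mul_smul] at hl
    obtain ⟨z, hzN, hz⟩ := hsurj _ (ih hl)
    have hmz : m - z ∈ N := hker _ (by rw [smul_sub, hz, sub_self])
    simpa using N.add_mem hmz hzN

theorem qInt_ne_zero {q : ℂ} (hq : ∀ n : ℕ, 0 < n → q ^ n ≠ 1) {n : ℕ} (hn : 0 < n) :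
    qInt q n ≠ 0 := by
  intro h
  have hgeom := geom_sum_mul q n
  rw [show ∑ i ∈ range n, q ^ i = qInt q n from rfl, h, zero_mul] at hgeom
  exact hq n hn (sub_eq_zero.mp hgeom.symm)

section Eop

variable (q : ℂ)

theorem Eop_monomial (n : ℕ) (a : ℂ) : Eop q (monomial n a) = qInt q n • monomial (n - 1) a := by
  simp [Eop, Polynomial.sum_monomial_index]

theorem Eop_C (a : ℂ) : Eop q (C a) = 0 := by
  rw [← monomial_zero_left, Eop_monomial, qInt, range_zero, sum_empty, zero_smul]

theorem Eop_X_mul (p : ℂ[X]) : Eop q (X * p) = q • (X * Eop q p) + p :=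
  LinearMap.congr_fun (EopFop_rel q) p

theorem coeff_Eop (p : ℂ[X]) (n : ℕ) : (Eop q p).coeff n = qInt q (n + 1) * p.coeff (n + 1) := by
  induction p using Polynomial.induction_on' with
  | add p r hp hr => simp [hp, hr, mul_add]
  | monomial m a =>
    rw [Eop_monomial]
    rcases m with _ | m
    · simp [qInt]
    · simp only [Nat.add_sub_cancel, coeff_smul, coeff_monomial, smul_eq_mul]
      by_cases h : m = n
      · subst h; simp
      · rw [if_neg h, if_neg (by omega), mul_zero, mul_zero]

theorem Eop_pow_monomial (n : ℕ) (a : ℂ) : (Eop q ^ (n + 1)) (monomial n a) = 0 := by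
  induction n generalizing a with
  | zero => rw [pow_one, monomial_zero_left, Eop_C]
  | succ n ih =>
    rw [pow_succ, Module.End.mul_apply, Eop_monomial, Nat.add_sub_cancel, map_smul, ih, smul_zero]

variable {q}

theorem eq_C_of_Eop_eq_zero (hq : ∀ n : ℕ, 0 < n → q ^ n ≠ 1) {p : ℂ[X]} (h : Eop q p = 0) :
    p = C (p.coeff 0) := by
  ext (_ | n)
  · rw [coeff_C_zero]
  · have hcoeff := coeff_Eop q p n
    rw [h, coeff_zero, eq_comm, mul_eq_zero] at hcoeff
    rw [coeff_C_succ]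
    exact hcoeff.resolve_left (qInt_ne_zero hq n.succ_pos)

theorem Eop_surjective (hq : ∀ n : ℕ, 0 < n → q ^ n ≠ 1) : Function.Surjective (Eop q) := by
  rw [← LinearMap.range_eq_top, eq_top_iff]
  rintro p -
  induction p using Polynomial.induction_on' with
  | add p r hp hr => exact add_mem hp hr
  | monomial n a =>
    refine ⟨monomial (n + 1) ((qInt q (n + 1))⁻¹ * a), ?_⟩
    rw [Eop_monomial, Nat.add_sub_cancel, smul_monomial, smul_eq_mul,
      mul_inv_cancel_left₀ (qInt_ne_zero hq n.succ_pos)]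

end Eop

section WeylModule

variable (q : ℂ)

theorem eW_mul_fW : eW q * fW q = q • (fW q * eW q) + 1 := by
  rw [eW, fW, ← map_mul, RingQuot.mkAlgHom_rel ℂ WeylRel.rel, map_add, map_smul, map_mul, map_one]

@[elab_as_elim]
theorem WeylAlg.induction {motive : WeylAlg q → Prop}
    (algebraMap : ∀ c : ℂ, motive (algebraMap ℂ (WeylAlg q) c)) (e : motive (eW q))
    (f : motive (fW q)) (add : ∀ a b, motive a → motive b → motive (a + b))
    (mul : ∀ a b, motive a → motive b → motive (a * b)) (w : WeylAlg q) : motive w := by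
  obtain ⟨a, rfl⟩ := RingQuot.mkAlgHom_surjective ℂ (WeylRel q) w
  induction a with
  | grade0 c => rw [AlgHom.commutes]; exact algebraMap c
  | grade1 b => cases b; exacts [f, e]
  | mul a b ha hb => rw [map_mul]; exact mul _ _ ha hb
  | add a b ha hb => rw [map_add]; exact add _ _ ha hb

theorem weylRep_eW : weylRep q (eW q) = Eop q := by
  rw [eW, weylRep, RingQuot.liftAlgHom_mkAlgHom_apply]
  simp

theorem weylRep_fW : weylRep q (fW q) = Fop := by
  rw [fW, weylRep, RingQuot.liftAlgHom_mkAlgHom_apply]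
  simp

theorem smul_eq_weylRep (w : WeylAlg q) (p : ℂ[X]) : w • p = weylRep q w p := rfl

theorem eW_pow_smul (k : ℕ) (p : ℂ[X]) : eW q ^ k • p = (Eop q ^ k) p := by
  rw [smul_eq_weylRep, map_pow, weylRep_eW]

theorem eW_smul (p : ℂ[X]) : eW q • p = Eop q p := by
  simpa using eW_pow_smul q 1 p

theorem fW_smul (p : ℂ[X]) : fW q • p = X * p := by
  rw [smul_eq_weylRep, weylRep_fW]
  rfl

instance : IsScalarTower ℂ (WeylAlg q) ℂ[X] :=
  .of_algebraMap_smul fun c p => by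
    rw [smul_eq_weylRep, AlgHom.commutes, Module.algebraMap_end_apply]

theorem aeval_fW_smul (r p : ℂ[X]) : aeval (fW q) r • p = r * p := by
  induction r using Polynomial.induction_on with
  | C a => rw [aeval_C, algebraMap_smul, smul_eq_C_mul]
  | add r s hr hs => rw [map_add, add_smul, hr, hs, add_mul]
  | monomial n a ih =>
    rw [show C a * X ^ (n + 1) = X * (C a * X ^ n) by ring, map_mul, aeval_X, mul_smul, ih,
      fW_smul, ← mul_assoc]

theorem mem_killedByPow_eW (p : ℂ[X]) : p ∈ killedByPow (eW q) := by
  induction p using Polynomial.induction_on' with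
  | add p r hp hr => exact add_mem hp hr
  | monomial n a => exact ⟨n + 1, by rw [eW_pow_smul, Eop_pow_monomial]⟩

variable {q}

theorem exists_smul_eq_one (hq : ∀ n : ℕ, 0 < n → q ^ n ≠ 1) {p : ℂ[X]} (hp : p ≠ 0) :
    ∃ w : WeylAlg q, w • p = 1 := by
  obtain ⟨k, hk0, hk⟩ := exists_pow_smul_ne_zero_and_smul_eq_zero (mem_killedByPow_eW q p) hp
  rw [eW_smul] at hk
  have hC := eq_C_of_Eop_eq_zero hq hk
  set c := (eW q ^ k • p).coeff 0
  have hc : c ≠ 0 := fun h => hk0 (by rw [hC, h, C_0])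
  refine ⟨algebraMap ℂ (WeylAlg q) c⁻¹ * eW q ^ k, ?_⟩
  rw [mul_smul, hC, algebraMap_smul, smul_C, smul_eq_mul, inv_mul_cancel₀ hc, C_1]

theorem isSimpleModule_weylModule (hq : ∀ n : ℕ, 0 < n → q ^ n ≠ 1) :
    IsSimpleModule (WeylAlg q) ℂ[X] := by
  refine isSimpleModule_iff_toSpanSingleton_surjective.mpr ⟨inferInstance, fun p hp r => ?_⟩
  obtain ⟨w, hw⟩ := exists_smul_eq_one hq hp
  refine ⟨aeval (fW q) r * w, ?_⟩
  rw [LinearMap.toSpanSingleton_apply, mul_smul, hw, aeval_fW_smul, mul_one]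

end WeylModule

section WeylLift

variable (q : ℂ) {M : Type*} [AddCommGroup M] [Module (WeylAlg q) M] [Module ℂ M]
  [IsScalarTower ℂ (WeylAlg q) M]

theorem eW_smul_aeval_smul {v : M} (hv : eW q • v = 0) (p : ℂ[X]) :
    eW q • aeval (fW q) p • v = aeval (fW q) (Eop q p) • v := by
  induction p using Polynomial.induction_on with
  | C a => rw [aeval_C, Eop_C, map_zero, zero_smul, algebraMap_smul, smul_comm, hv, smul_zero]
  | add p r hp hr => rw [map_add, add_smul, smul_add, hp, hr, map_add, map_add, add_smul]
  | monomial n a ih =>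
    rw [show C a * X ^ (n + 1) = X * (C a * X ^ n) by ring, Eop_X_mul]
    generalize C a * X ^ n = p at ih ⊢
    calc eW q • aeval (fW q) (X * p) • v = (eW q * fW q) • aeval (fW q) p • v := by
          rw [map_mul, aeval_X, mul_smul, mul_smul]
      _ = q • fW q • eW q • aeval (fW q) p • v + aeval (fW q) p • v := by
          rw [eW_mul_fW, add_smul, one_smul, smul_assoc, mul_smul]
      _ = aeval (fW q) (q • (X * Eop q p) + p) • v := by
          rw [ih, map_add, add_smul, map_smul, map_mul, aeval_X, smul_assoc, mul_smul]

def weylLift (v : M) (hv : eW q • v = 0) : ℂ[X] →ₗ[WeylAlg q] M where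
  toFun p := aeval (fW q) p • v
  map_add' p r := by rw [map_add, add_smul]
  map_smul' w := by
    simp only [RingHom.id_apply]
    induction w using WeylAlg.induction with
    | algebraMap c => intro p; rw [algebraMap_smul, map_smul, smul_assoc, algebraMap_smul]
    | e => intro p; rw [eW_smul, eW_smul_aeval_smul q hv]
    | f => intro p; rw [fW_smul, map_mul, aeval_X, mul_smul]
    | add a b ha hb => intro p; rw [add_smul, map_add, add_smul, ha, hb, add_smul]
    | mul a b ha hb => intro p; rw [mul_smul, ha, hb, mul_smul]

theorem weylLift_apply {v : M} (hv : eW q • v = 0) (p : ℂ[X]) :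
    weylLift q v hv p = aeval (fW q) p • v :=
  rfl

variable {ι : Type*} {v : ι → M} (hv : ∀ i, eW q • v i = 0)

def weylLiftFinsupp : (ι →₀ ℂ[X]) →ₗ[WeylAlg q] M :=
  Finsupp.lsum ℕ fun i => weylLift q (v i) (hv i)

theorem weylLiftFinsupp_single (i : ι) (p : ℂ[X]) :
    weylLiftFinsupp q hv (Finsupp.single i p) = aeval (fW q) p • v i := by
  rw [weylLiftFinsupp, Finsupp.lsum_single, weylLift_apply]

theorem weylLiftFinsupp_mapRange_C (z : ι →₀ ℂ) :
    weylLiftFinsupp q hv (z.mapRange C C_0) = Finsupp.linearCombination ℂ v z := by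
  rw [weylLiftFinsupp, Finsupp.lsum_apply, Finsupp.sum_mapRange_index (by simp),
    Finsupp.linearCombination_apply]
  refine Finsupp.sum_congr fun i _ => ?_
  rw [weylLift_apply, aeval_C, algebraMap_smul]

variable {q}

theorem Finsupp.exists_mapRange_C_of_eW_smul_eq_zero (hq : ∀ n : ℕ, 0 < n → q ^ n ≠ 1)
    {x : ι →₀ ℂ[X]} (hx : eW q • x = 0) : ∃ z : ι →₀ ℂ, x = z.mapRange C C_0 := by
  refine ⟨x.mapRange (coeff · 0) (coeff_zero 0), Finsupp.ext fun i => ?_⟩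
  rw [Finsupp.mapRange_apply, Finsupp.mapRange_apply]
  refine eq_C_of_Eop_eq_zero hq ?_
  rw [← eW_smul, ← Finsupp.smul_apply, hx, Finsupp.zero_apply]

theorem weylLiftFinsupp_injective (hq : ∀ n : ℕ, 0 < n → q ^ n ≠ 1)
    (hli : LinearIndependent ℂ v) : Function.Injective (weylLiftFinsupp q hv) := by
  rw [← LinearMap.ker_eq_bot, Submodule.eq_bot_iff]
  intro x hx
  by_contra hx0
  obtain ⟨k, hk0, hk⟩ := exists_pow_smul_ne_zero_and_smul_eq_zero
    (Finsupp.mem_killedByPow (mem_killedByPow_eW q) x) hx0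
  obtain ⟨z, hz⟩ := Finsupp.exists_mapRange_C_of_eW_smul_eq_zero hq hk
  have hz0 : Finsupp.linearCombination ℂ v z = 0 := by
    rw [← weylLiftFinsupp_mapRange_C q hv, ← hz, map_smul, LinearMap.mem_ker.mp hx, smul_zero]
  rw [hz, linearIndependent_iff.mp hli z hz0, Finsupp.mapRange_zero] at hk0
  exact hk0 rfl

theorem weylLiftFinsupp_surjective (hq : ∀ n : ℕ, 0 < n → q ^ n ≠ 1)
    (hspan : ∀ x : M, eW q • x = 0 → x ∈ Submodule.span ℂ (Set.range v))
    (hM : ∀ m : M, m ∈ killedByPow (eW q)) : Function.Surjective (weylLiftFinsupp q hv) := by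
  have hle : Submodule.span ℂ (Set.range v) ≤
      (LinearMap.range (weylLiftFinsupp q hv)).restrictScalars ℂ := by
    rw [Submodule.span_le]
    rintro _ ⟨i, rfl⟩
    exact ⟨Finsupp.single i 1, by rw [weylLiftFinsupp_single, map_one, one_smul]⟩
  have hsurj (x : ι →₀ ℂ[X]) : ∃ z, eW q • z = x :=
    Finsupp.exists_smul_eq (fun p => (Eop_surjective hq p).imp fun r hr => by rw [eW_smul, hr]) x
  rw [← LinearMap.range_eq_top, eq_top_iff]
  rintro m -
  refine mem_of_mem_killedByPow (LinearMap.range _) (fun x hx => hle (hspan x hx))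
    (fun y hy => ?_) (hM m)
  obtain ⟨x, rfl⟩ := hy
  obtain ⟨z, rfl⟩ := hsurj x
  exact ⟨_, ⟨z, rfl⟩, (map_smul _ _ _).symm⟩

end WeylLift

theorem stmt16_general (q : ℂ) (hq : ∀ n : ℕ, 0 < n → q ^ n ≠ 1) :
    IsSimpleModule (WeylAlg q) (Polynomial ℂ) ∧
      ∀ (M : Type) [AddCommGroup M] [Module (WeylAlg q) M],
        (∀ m : M, ∃ l : ℕ, ((eW q) ^ l) • m = 0) →
        ∃ ι : Type, Nonempty (M ≃ₗ[WeylAlg q] (ι →₀ Polynomial ℂ)) := by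
  refine ⟨isSimpleModule_weylModule hq, fun M _ _ hM => ?_⟩
  let _ : Module ℂ M := Module.compHom M (algebraMap ℂ (WeylAlg q))
  have : IsScalarTower ℂ (WeylAlg q) M := .of_algebraMap_smul fun _ _ => rfl
  let K := LinearMap.ker (DistribSMul.toLinearMap ℂ M (eW q))
  let b := Module.Basis.ofVectorSpace ℂ K
  have hv (i) : eW q • (b i : M) = 0 := (b i).2
  have hspan (x : M) (hx : eW q • x = 0) :
      x ∈ Submodule.span ℂ (Set.range fun i => (b i : M)) := by
    have h := Submodule.mem_map_of_mem (f := K.subtype) (b.mem_span ⟨x, hx⟩)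
    rwa [Submodule.map_span, ← Set.range_comp] at h
  have hli : LinearIndependent ℂ fun i => (b i : M) :=
    b.linearIndependent.map' K.subtype K.ker_subtype
  exact ⟨_, ⟨(LinearEquiv.ofBijective _ ⟨weylLiftFinsupp_injective hv hq hli,
    weylLiftFinsupp_surjective hv hq hspan hM⟩).symm⟩⟩

/-- Let `q ∈ ℂ*` not be a root of unity and `W = ⟨e, f | ef = qfe + 1⟩`. The module
`H = ℂ[f]` (with `f` acting by multiplication and `e` as the `q`-derivative) is a simple
`W`-module, and every `W`-module `M` on which `e` acts locally nilpotently is isomorphic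
to a direct sum of copies of `H`. In particular the category of such locally nilpotent
`W`-modules is semisimple. -/
theorem stmt16 (q : ℂ) (hq0 : q ≠ 0) (hq : ∀ n : ℕ, 0 < n → q ^ n ≠ 1) :
    IsSimpleModule (WeylAlg q) (Polynomial ℂ) ∧
      ∀ (M : Type) [AddCommGroup M] [Module (WeylAlg q) M],
        (∀ m : M, ∃ l : ℕ, ((eW q) ^ l) • m = 0) →
        ∃ ι : Type, Nonempty (M ≃ₗ[WeylAlg q] (ι →₀ Polynomial ℂ)) :=
  stmt16_general q hq
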